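/- Let β be a complex number avoiding nonpositive integers, f_n = 1/(β+n), and for t ≥ 0 let h_t(x_1, ..., x_k) denote the complete homogeneous symmetric polynomial of degree t. Then (f_0 − f_{q+1}) · h_t(f_0, f_1, ..., f_{q+1}) = ∑_{v=0}^{t} h_v(f_1, ..., f_q) · (f_0^{t−v+1} − f_{q+1}^{t−v+1}) for all integers t ≥ 0 and q ≥ 1. -/

import Mathlib

/-!
Write `h_t(x_0, …, x_{q+1})` for the complete homogeneous sum, `a = x_0`, `b = x_{q+1}` and
`C_v = h_v(x_1, …, x_q)`. Splitting monotone index maps by whether they hit the first index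
gives `h_{t+1}(x_0, …) = h_{t+1}(x_1, …, x_{q+1}) + a h_t(x_0, …)`, and splitting by the last
index gives `h_{t+1}(x_1, …, x_{q+1}) = ∑_v C_v b^{t+1-v}`. After multiplying by `a - b`,
induction on `t` telescopes through `(a - b) b^{n+1} + a (a^{n+1} - b^{n+1}) = a^{n+2} - b^{n+2}`.
-/

open Finset

section CompleteHomogeneous

variable {R : Type*} [CommSemiring R]

noncomputable def completeHomogeneous (t : ℕ) {k : ℕ} (y : Fin k → R) : R :=
  ∑ f ∈ univ.filter (fun f : Fin t → Fin k => Monotone f), ∏ r, y (f r)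

@[simp]
lemma completeHomogeneous_zero {k : ℕ} (y : Fin k → R) : completeHomogeneous 0 y = 1 := by
  simp [completeHomogeneous, Subsingleton.monotone]

lemma completeHomogeneous_comp_rev (t : ℕ) {k : ℕ} (y : Fin k → R) :
    completeHomogeneous t (y ∘ Fin.rev) = completeHomogeneous t y := by
  have rev_comp_rev (f : Fin t → Fin k) (hf : Monotone f) :
      Monotone (Fin.rev ∘ f ∘ Fin.rev) :=
    Fin.rev_anti.comp (hf.comp_antitone Fin.rev_anti)
  exact sum_nbij' (fun f => Fin.rev ∘ f ∘ Fin.rev) (fun f => Fin.rev ∘ f ∘ Fin.rev)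
    (by simpa using rev_comp_rev) (by simpa using rev_comp_rev)
    (fun f _ => by ext; simp) (fun f _ => by ext; simp)
    (fun f _ => Fintype.prod_equiv Fin.revPerm _ _ (by simp))

lemma monotone_cons_zero_iff {t k : ℕ} (g : Fin t → Fin (k + 1)) :
    Monotone (Fin.cons 0 g : Fin (t + 1) → Fin (k + 1)) ↔ Monotone g := by
  rw [monotone_iff_forall_lt, monotone_iff_forall_lt]
  exact (Fin.liftFun_cons _).trans (and_iff_right fun _ => Fin.zero_le _)

lemma sum_monotone_apply_zero_ne_zero (t : ℕ) {k : ℕ} (y : Fin (k + 1) → R) :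
    ∑ f ∈ univ.filter (fun f : Fin (t + 1) → Fin (k + 1) => Monotone f ∧ f 0 ≠ 0),
        ∏ r, y (f r)
      = completeHomogeneous (t + 1) (Fin.tail y) := by
  refine sum_bij' (fun f hf r => (f r).pred fun h0 => ?_) (fun g _ => Fin.succ ∘ g)
    ?_ ?_ ?_ ?_ ?_
  · simp only [mem_filter, mem_univ, true_and] at hf
    exact hf.2 (le_antisymm (h0 ▸ hf.1 (Fin.zero_le r)) (Fin.zero_le _))
  · intro f hf
    simp only [mem_filter, mem_univ, true_and] at hf ⊢
    exact Fin.monotone_pred_comp _ hf.1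
  · intro g hg
    simp only [mem_filter, mem_univ, true_and] at hg ⊢
    exact ⟨Fin.strictMono_succ.monotone.comp hg, Fin.succ_ne_zero _⟩
  · intro f _
    ext r
    simp
  · intro g _
    ext r
    simp
  · intro f _
    simp [Fin.tail]

lemma sum_monotone_apply_zero_eq_zero (t : ℕ) {k : ℕ} (y : Fin (k + 1) → R) :
    ∑ f ∈ univ.filter (fun f : Fin (t + 1) → Fin (k + 1) => Monotone f ∧ f 0 = 0),
        ∏ r, y (f r)
      = y 0 * completeHomogeneous t y := by
  rw [completeHomogeneous, mul_sum]
  refine sum_nbij' Fin.tail (fun g => (Fin.cons 0 g : Fin (t + 1) → Fin (k + 1)))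
    ?_ ?_ ?_ ?_ ?_
  · intro f hf
    simp only [mem_filter, mem_univ, true_and] at hf ⊢
    exact hf.1.comp Fin.strictMono_succ.monotone
  · intro g hg
    simp only [mem_filter, mem_univ, true_and] at hg ⊢
    exact ⟨(monotone_cons_zero_iff g).2 hg, rfl⟩
  · intro f hf
    simp only [mem_filter, mem_univ, true_and] at hf
    rw [← hf.2, Fin.cons_self_tail]
  · intro g _
    exact Fin.tail_cons _ _
  · intro f hf
    simp only [mem_filter, mem_univ, true_and] at hf
    rw [Fin.prod_univ_succ, hf.2]
    rfl

lemma completeHomogeneous_succ_eq_tail_add (t : ℕ) {k : ℕ} (y : Fin (k + 1) → R) :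
    completeHomogeneous (t + 1) y
      = completeHomogeneous (t + 1) (Fin.tail y) + y 0 * completeHomogeneous t y := by
  rw [completeHomogeneous, ← sum_filter_not_add_sum_filter _ (fun f => f 0 = 0), filter_filter,
    filter_filter, ← sum_monotone_apply_zero_ne_zero, ← sum_monotone_apply_zero_eq_zero]

lemma completeHomogeneous_succ_eq_init_add (t : ℕ) {k : ℕ} (y : Fin (k + 1) → R) :
    completeHomogeneous (t + 1) y
      = completeHomogeneous (t + 1) (Fin.init y) + y (Fin.last k) * completeHomogeneous t y := by
  have tail_comp_rev : Fin.tail (y ∘ Fin.rev) = Fin.init y ∘ Fin.rev := by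
    ext i
    simp [Fin.tail, Fin.init, Fin.rev_succ]
  rw [← completeHomogeneous_comp_rev (t + 1) y, completeHomogeneous_succ_eq_tail_add,
    tail_comp_rev, completeHomogeneous_comp_rev, completeHomogeneous_comp_rev]
  simp

lemma completeHomogeneous_eq_sum_init (t : ℕ) {k : ℕ} (y : Fin (k + 1) → R) :
    completeHomogeneous t y
      = ∑ v ∈ range (t + 1), completeHomogeneous v (Fin.init y) * y (Fin.last k) ^ (t - v) := by
  induction t with
  | zero => simp
  | succ t ih =>
    rw [completeHomogeneous_succ_eq_init_add, ih, sum_range_succ _ (t + 1), mul_sum, add_comm]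
    congr 1
    · refine sum_congr rfl fun v hv => ?_
      rw [Nat.sub_add_comm (mem_range_succ_iff.1 hv), pow_succ]
      ring
    · simp [mul_comm]

end CompleteHomogeneous

theorem sub_mul_completeHomogeneous {R : Type*} [CommRing R] (t : ℕ) {k : ℕ}
    (y : Fin (k + 2) → R) :
    (y 0 - y (Fin.last (k + 1))) * completeHomogeneous t y
      = ∑ v ∈ range (t + 1), completeHomogeneous v (Fin.init (Fin.tail y)) *
          (y 0 ^ (t - v + 1) - y (Fin.last (k + 1)) ^ (t - v + 1)) := by
  induction t with
  | zero => simp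
  | succ t ih =>
    have hlast : Fin.tail y (Fin.last k) = y (Fin.last (k + 1)) := by simp [Fin.tail]
    rw [completeHomogeneous_succ_eq_tail_add, mul_add, mul_left_comm _ (y 0), ih,
      completeHomogeneous_eq_sum_init (t + 1) (Fin.tail y), hlast, sum_range_succ _ (t + 1),
      sum_range_succ _ (t + 1), mul_add, mul_sum, mul_sum, add_right_comm, ← sum_add_distrib]
    congr 1
    · refine sum_congr rfl fun v hv => ?_
      rw [Nat.sub_add_comm (mem_range_succ_iff.1 hv)]
      ring
    · simp [mul_comm]

theorem homogeneous_symmetric_telescoping_general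
    (β : ℂ) (t q : ℕ) :
    (β⁻¹ - (β + ((q + 1 : ℕ) : ℂ))⁻¹) *
        ∑ f ∈ Finset.univ.filter (fun f : Fin t → Fin (q + 2) => Monotone f),
          ∏ r, (β + ((f r : ℕ) : ℂ))⁻¹
      = ∑ v ∈ Finset.range (t + 1),
          (∑ f ∈ Finset.univ.filter (fun f : Fin v → Fin q => Monotone f),
            ∏ r, (β + (((f r : ℕ) + 1 : ℕ) : ℂ))⁻¹) *
          (β⁻¹ ^ (t - v + 1) - (β + ((q + 1 : ℕ) : ℂ))⁻¹ ^ (t - v + 1)) := by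
  have key := sub_mul_completeHomogeneous t (fun i : Fin (q + 2) => (β + ((i : ℕ) : ℂ))⁻¹)
  simp only [completeHomogeneous, Fin.val_zero, Nat.cast_zero, add_zero] at key
  exact key

/-- With f_n = 1/(β+n) and h_t the complete homogeneous symmetric sum
    (h_t(x_1,...,x_k) = ∑_{1≤j₁≤...≤j_t≤k} x_{j₁}⋯x_{j_t}, h_0 = 1):
    (f_0 - f_{q+1}) h_t(f_0,...,f_{q+1})
      = ∑_{v=0}^t h_v(f_1,...,f_q)(f_0^{t-v+1} - f_{q+1}^{t-v+1}). -/
theorem homogeneous_symmetric_telescoping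
    (β : ℂ) (hβ : ∀ k : ℕ, β ≠ -(k : ℂ)) (t q : ℕ) (hq : 1 ≤ q) :
    (β⁻¹ - (β + ((q + 1 : ℕ) : ℂ))⁻¹) *
        ∑ f ∈ Finset.univ.filter (fun f : Fin t → Fin (q + 2) => Monotone f),
          ∏ r, (β + ((f r : ℕ) : ℂ))⁻¹
      = ∑ v ∈ Finset.range (t + 1),
          (∑ f ∈ Finset.univ.filter (fun f : Fin v → Fin q => Monotone f),
            ∏ r, (β + (((f r : ℕ) + 1 : ℕ) : ℂ))⁻¹) *
          (β⁻¹ ^ (t - v + 1) - (β + ((q + 1 : ℕ) : ℂ))⁻¹ ^ (t - v + 1)) :=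
  homogeneous_symmetric_telescoping_general β t q
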